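/- Soundness of the product-construction reduction of simulation to safety: given LTS Σ1 and a deterministic, completed LTS Σ2' obtained from Σ2 by adding a distinguished error state with transitions for all non-enabled actions, the synchronized product Σ1 × Σ2' reaches no state whose second component is the error state if and only if Σ2 simulates Σ1 (assuming Σ1 and Σ2 individually are safe and Σ2 is deterministic). -/
import Mathlib


/-- An LTS with single-action-labeled transitions. -/
structure LTS (Q A : Type*) where
  init : Q
  tr : Q → A → Q → Prop

inductive Reaches {Q A : Type*} (S : LTS Q A) : Q → List A → Prop
  | init : Reaches S S.init []
  | step {q τ a q'} : Reaches S q τ → S.tr q a q' → Reaches S q' (τ ++ [a])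

def IsSim {Q1 Q2 A : Type*} (S1 : LTS Q1 A) (S2 : LTS Q2 A) (R : Q1 → Q2 → Prop) : Prop :=
  R S1.init S2.init ∧
  ∀ q1 q2 a q1', R q1 q2 → S1.tr q1 a q1' → ∃ q2', S2.tr q2 a q2' ∧ R q1' q2'

/-- Transitions of the completion of `S2`: a fresh error state `none` receives all
non-enabled actions, and is a sink. -/
def complTr {Q2 A : Type*} (S2 : LTS Q2 A) : Option Q2 → A → Option Q2 → Prop
  | some q, a, some q' => S2.tr q a q'
  | some q, a, none => ∀ q', ¬ S2.tr q a q'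
  | none, _, none => True
  | none, _, some _ => False

/-- The synchronized product of `S1` with the completion of `S2`. -/
def prodLTS {Q1 Q2 A : Type*} (S1 : LTS Q1 A) (S2 : LTS Q2 A) :
    LTS (Q1 × Option Q2) A :=
  ⟨(S1.init, some S2.init), fun p a p' => S1.tr p.1 a p'.1 ∧ complTr S2 p.2 a p'.2⟩

/-- The product reaches no error state iff `S2` simulates `S1`
(for deterministic `S2`). -/
theorem product_safety_iff_simulation {Q1 Q2 A : Type*}
    (S1 : LTS Q1 A) (S2 : LTS Q2 A)
    (hdet : ∀ q a q1 q2, S2.tr q a q1 → S2.tr q a q2 → q1 = q2) :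
    (∀ p τ, Reaches (prodLTS S1 S2) p τ → p.2 ≠ none) ↔ ∃ R, IsSim S1 S2 R := by
  constructor
  · intro hsafe
    refine ⟨fun q1 q2 => ∃ τ, Reaches (prodLTS S1 S2) (q1, some q2) τ, ⟨[], Reaches.init⟩, ?_⟩
    rintro q1 q2 a q1' ⟨τ, hreach⟩ htr
    by_cases h : ∃ q2', S2.tr q2 a q2'
    · obtain ⟨q2', h2⟩ := h
      exact ⟨q2', h2, τ ++ [a], hreach.step ⟨htr, h2⟩⟩
    · push_neg at h
      have : Reaches (prodLTS S1 S2) (q1', none) (τ ++ [a]) :=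
        hreach.step ⟨htr, h⟩
      exact absurd rfl (hsafe _ _ this)
  · rintro ⟨R, hinit, hstep⟩ p τ hreach
    suffices h : ∃ q2, p.2 = some q2 ∧ R p.1 q2 by
      obtain ⟨q2, h1, _⟩ := h; simp [h1]
    induction hreach with
    | init => exact ⟨S2.init, rfl, hinit⟩
    | @step q τ a q' hr ht ih =>
      obtain ⟨q2, hq2, hR⟩ := ih
      obtain ⟨ht1, ht2⟩ := ht
      obtain ⟨q2', h2, hR'⟩ := hstep q.1 q2 a q'.1 hR ht1
      rw [hq2] at ht2
      cases hq' : q'.2 with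
      | none => rw [hq'] at ht2; exact absurd h2 (ht2 q2')
      | some q2'' =>
        rw [hq'] at ht2
        exact ⟨q2'', rfl, hdet _ _ _ _ ht2 h2 ▸ hR'⟩
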